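/- arXiv:1605.00201 — 3 statements merged into one kernel-verified Lean document; each statement's English description precedes it below -/
import Mathlib

section
/- Let P : ℝⁿ → ℝ ∪ {∞} be proper closed convex, f : ℝⁿ → ℝ differentiable with L-Lipschitz gradient, γ ∈ (0, 1/L), and let F_γ(x) = inf_y { f(y) + P(y) + D_φ(y,x) } with φ(x) = ‖x‖²/(2γ) − f(x). If f + P is coercive (i.e., liminf_{‖x‖→∞} (f+P)(x)/‖x‖ > 0), then F_γ is level bounded, i.e., all sublevel sets {x : F_γ(x) ≤ c} are bounded. -/
/-!
For `φ = ‖·‖²/(2γ) - f` the Bregman distance is `D_φ(y, x) = ‖y - x‖²/(2γ) - D_f(y, x)`, and the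
descent lemma `D_f(y, x) ≤ L/2 ‖y - x‖²` makes `D_φ(y, x) ≥ α ‖y - x‖²` with `α = 1/(2γ) - L/2 > 0`.
Coercivity together with lower semicontinuity gives `f + P ≥ ε‖·‖ - b`, hence
`F_γ(x) ≥ inf_y (ε‖y‖ + α‖y - x‖²) - b ≥ ε‖x‖ - ε²/(4α) - b`, so every sublevel set of `F_γ` is bounded.
-/

open RealInnerProductSpace Filter Bornology

section Bregman

variable {E : Type*} [NormedAddCommGroup E] [InnerProductSpace ℝ E] [CompleteSpace E]

noncomputable def bregman (φ : E → ℝ) (y x : E) : ℝ := φ y - φ x - ⟪gradient φ x, y - x⟫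

theorem bregman_sub {g f : E → ℝ} {x : E} (hg : DifferentiableAt ℝ g x)
    (hf : DifferentiableAt ℝ f x) (y : E) :
    bregman (fun z => g z - f z) y x = bregman g y x - bregman f y x := by
  simp only [bregman, inner_gradient_left, fderiv_fun_sub hg hf, sub_apply]
  ring

theorem bregman_norm_sq_div (c : ℝ) (y x : E) :
    bregman (fun z => ‖z‖ ^ 2 / c) y x = ‖y - x‖ ^ 2 / c := by
  have hd : HasFDerivAt (fun z : E => ‖z‖ ^ 2 * c⁻¹) (c⁻¹ • 2 • innerSL ℝ x) x :=
    (hasStrictFDerivAt_norm_sq x).hasFDerivAt.mul_const c⁻¹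
  simp_rw [div_eq_mul_inv]
  simp only [bregman, inner_gradient_left, hd.fderiv, smul_apply,
    innerSL_apply_apply, smul_eq_mul, norm_sub_sq_real, inner_sub_right,
    real_inner_self_eq_norm_sq, real_inner_comm x y]
  ring

theorem bregman_le_of_lipschitzWith_gradient {f : E → ℝ} {K : NNReal}
    (hf : Differentiable ℝ f) (hlip : LipschitzWith K (gradient f)) (y x : E) :
    bregman f y x ≤ K / 2 * ‖y - x‖ ^ 2 := by
  set v := y - x
  -- the claim is `h 1 ≤ h 0`, and `h' ≤ 0` on `[0, 1]` by the Lipschitz bound on the gradient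
  let h : ℝ → ℝ := fun t => f (x + t • v) - t * ⟪gradient f x, v⟫ - K / 2 * ‖v‖ ^ 2 * t ^ 2
  have hderiv : ∀ t, HasDerivAt h
      (⟪gradient f (x + t • v), v⟫ - ⟪gradient f x, v⟫ - K * ‖v‖ ^ 2 * t) t := by
    intro t
    have hline : HasDerivAt (fun t : ℝ => x + t • v) v t := by
      simpa using ((hasDerivAt_id t).smul_const v).const_add x
    have hfline := (hf (x + t • v)).hasFDerivAt.comp_hasDerivAt t hline
    rw [← inner_gradient_left] at hfline
    refine ((hfline.sub ((hasDerivAt_id t).mul_const _)).sub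
      ((hasDerivAt_pow 2 t).const_mul (K / 2 * ‖v‖ ^ 2))).congr_deriv ?_
    simp only [Nat.cast_ofNat, one_mul]
    ring
  have hanti : AntitoneOn h (Set.Icc 0 1) := by
    refine antitoneOn_of_hasDerivWithinAt_nonpos (convex_Icc 0 1)
      (fun t _ => (hderiv t).continuousAt.continuousWithinAt)
      (fun t _ => (hderiv t).hasDerivWithinAt) fun t ht => ?_
    rw [interior_Icc] at ht
    calc ⟪gradient f (x + t • v), v⟫ - ⟪gradient f x, v⟫ - K * ‖v‖ ^ 2 * t
        = ⟪gradient f (x + t • v) - gradient f x, v⟫ - K * ‖v‖ ^ 2 * t := by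
          rw [inner_sub_left]
      _ ≤ ‖gradient f (x + t • v) - gradient f x‖ * ‖v‖ - K * ‖v‖ ^ 2 * t := by
          gcongr; exact real_inner_le_norm _ _
      _ ≤ K * ‖t • v‖ * ‖v‖ - K * ‖v‖ ^ 2 * t := by
          gcongr
          simpa [dist_eq_norm] using hlip.dist_le_mul (x + t • v) x
      _ = 0 := by rw [norm_smul, Real.norm_of_nonneg ht.1.le]; ring
  have := hanti (by simp) (by simp) zero_le_one
  simp only [h, v, bregman, one_smul, zero_smul, add_zero, add_sub_cancel, zero_mul,
    one_mul, sub_zero, one_pow, mul_one, ne_eq, OfNat.ofNat_ne_zero, not_false_eq_true,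
    zero_pow] at this ⊢
  linarith

theorem mul_norm_sq_le_bregman_norm_sq_div_sub {f : E → ℝ} {K : NNReal}
    (hf : Differentiable ℝ f) (hlip : LipschitzWith K (gradient f)) (c : ℝ) (y x : E) :
    (c⁻¹ - K / 2) * ‖y - x‖ ^ 2 ≤ bregman (fun z => ‖z‖ ^ 2 / c - f z) y x := by
  have hsq : DifferentiableAt ℝ (fun z : E => ‖z‖ ^ 2 / c) x := by
    simpa only [div_eq_mul_inv, id] using (differentiableAt_id.norm_sq ℝ).mul_const c⁻¹
  rw [bregman_sub hsq (hf x), bregman_norm_sq_div]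
  linarith [bregman_le_of_lipschitzWith_gradient hf hlip y x, div_eq_inv_mul (‖y - x‖ ^ 2) c]

end Bregman

theorem LowerSemicontinuous.exists_coe_le_of_isCompact {α : Type*} [TopologicalSpace α]
    {g : α → EReal} (hg : LowerSemicontinuous g) (hbot : ∀ x, g x ≠ ⊥) {K : Set α}
    (hK : IsCompact K) : ∃ m : ℝ, ∀ y ∈ K, (m : EReal) ≤ g y := by
  rcases K.eq_empty_or_nonempty with rfl | hne
  · exact ⟨0, by simp⟩
  obtain ⟨a, -, hmin⟩ := (hg.lowerSemicontinuousOn K).exists_isMinOn hne hK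
  exact ⟨(g a).toReal, fun y hy => (EReal.coe_toReal_le (hbot a)).trans (hmin hy)⟩

theorem EReal.coe_mul_le_of_lt_mul_inv {z : EReal} {ε r : ℝ} (hr : 0 < r)
    (h : (ε : EReal) < z * ((r⁻¹ : ℝ) : EReal)) : ((ε * r : ℝ) : EReal) ≤ z := by
  induction z using EReal.rec with
  | bot => simp [EReal.bot_mul_of_pos (EReal.coe_pos.2 (inv_pos.2 hr))] at h
  | coe z =>
    rw [← EReal.coe_mul, EReal.coe_lt_coe_iff, ← div_eq_mul_inv, lt_div_iff₀ hr] at h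
    exact_mod_cast h.le
  | top => exact le_top

theorem exists_linear_lower_bound_of_coercive {E : Type*} [NormedAddCommGroup E] [ProperSpace E]
    {g : E → EReal} (hg : LowerSemicontinuous g) (hbot : ∀ x, g x ≠ ⊥)
    (hcoer : 0 < liminf (fun x => g x * ((‖x‖⁻¹ : ℝ) : EReal)) (cobounded E)) :
    ∃ ε > 0, ∃ b : ℝ, ∀ y, ((ε * ‖y‖ - b : ℝ) : EReal) ≤ g y := by
  obtain ⟨ε, hε0, hεlim⟩ := EReal.exists_between_coe_real hcoer
  have hε : (0 : ℝ) < ε := by exact_mod_cast hε0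
  obtain ⟨R, hR0, hR⟩ :=
    (isBounded_compl_iff.mpr (eventually_lt_of_lt_liminf hεlim)).exists_pos_norm_le
  obtain ⟨m, hm⟩ := hg.exists_coe_le_of_isCompact hbot (isCompact_closedBall (0 : E) R)
  refine ⟨ε, hε, ε * R + |m|, fun y => ?_⟩
  by_cases hy : ‖y‖ ≤ R
  · refine le_trans ?_ (hm y (mem_closedBall_zero_iff.2 hy))
    exact EReal.coe_le_coe_iff.2 (by nlinarith [neg_abs_le m])
  · push Not at hy
    have hfar := EReal.coe_mul_le_of_lt_mul_inv (hR0.trans hy) (not_not.1 (mt (hR y) hy.not_ge))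
    refine le_trans (EReal.coe_le_coe_iff.2 ?_) hfar
    nlinarith [abs_nonneg m]

theorem mul_norm_sub_sq_le {E : Type*} [NormedAddCommGroup E] {ε α : ℝ} (hε : 0 ≤ ε)
    (hα : 0 < α) (x y : E) :
    ε * ‖x‖ - ε ^ 2 / (4 * α) ≤ ε * ‖y‖ + α * ‖y - x‖ ^ 2 := by
  have htri : ‖x‖ ≤ ‖y‖ + ‖y - x‖ := norm_sub_rev y x ▸ norm_le_norm_add_norm_sub' x y
  have hsq : ε * ‖y - x‖ - α * ‖y - x‖ ^ 2 ≤ ε ^ 2 / (4 * α) := by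
    rw [le_div_iff₀ (by positivity)]
    nlinarith [sq_nonneg (2 * α * ‖y - x‖ - ε)]
  nlinarith

theorem isBounded_setOf_le_of_linear_lower_bound {E : Type*} [NormedAddCommGroup E]
    {F : E → EReal} {ε a : ℝ} (hε : 0 < ε) (hF : ∀ x, ((ε * ‖x‖ - a : ℝ) : EReal) ≤ F x)
    (c : ℝ) : IsBounded {x | F x ≤ c} := by
  refine (Metric.isBounded_closedBall (x := 0) (r := (c + a) / ε)).subset fun x hx => ?_
  rw [mem_closedBall_zero_iff, le_div_iff₀ hε]
  have := EReal.coe_le_coe_iff.1 ((hF x).trans hx)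
  linarith

theorem stmt1_general {n : ℕ} (f φ : EuclideanSpace ℝ (Fin n) → ℝ)
    (P : EuclideanSpace ℝ (Fin n) → EReal)
    (L γ : ℝ) (hγ : 0 < γ) (hγL : γ < 1 / L)
    (hf : ContDiff ℝ 2 f)
    (hlip : LipschitzWith (Real.toNNReal L) (fun x => gradient f x))
    -- P is proper
    (hPnb : ∀ x, P x ≠ ⊥)
    -- P is closed
    (hPlsc : LowerSemicontinuous P)
    -- φ(x) = ‖x‖²/(2γ) − f(x)
    (hφ : ∀ x, φ x = ‖x‖ ^ 2 / (2 * γ) - f x)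
    -- the forward-backward envelope
    (Fγ : EuclideanSpace ℝ (Fin n) → EReal)
    (hFγ : ∀ x, Fγ x = ⨅ y, ((f y : EReal) + P y +
      ((φ y - φ x - ⟪gradient φ x, y - x⟫ : ℝ) : EReal)))
    -- f + P is coercive: liminf_{‖x‖→∞} (f+P)(x)/‖x‖ > 0
    (hcoer : 0 < liminf (fun x => ((f x : EReal) + P x) * ((‖x‖⁻¹ : ℝ) : EReal))
      (Bornology.cobounded (EuclideanSpace ℝ (Fin n)))) :
    -- F_γ is level bounded
    ∀ c : ℝ, Bornology.IsBounded {x : EuclideanSpace ℝ (Fin n) | Fγ x ≤ (c : EReal)} := by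
  intro c
  have hL : 0 < L := one_div_pos.1 (hγ.trans hγL)
  have hD : ∀ x y, ((2 * γ)⁻¹ - L / 2) * ‖y - x‖ ^ 2 ≤ bregman φ y x := fun x y => by
    have := mul_norm_sq_le_bregman_norm_sq_div_sub (hf.differentiable (by norm_num)) hlip
      (2 * γ) y x
    rwa [Real.coe_toNNReal L hL.le, ← funext hφ] at this
  set α := (2 * γ)⁻¹ - L / 2
  have hα : 0 < α := by
    have : γ * L < 1 := (lt_div_iff₀ hL).1 hγL
    simp only [α, sub_pos]
    field_simp
    linarith
  have hlsc : LowerSemicontinuous fun x => (f x : EReal) + P x :=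
    LowerSemicontinuous.add' (continuous_coe_real_ereal.comp hf.continuous).lowerSemicontinuous
      hPlsc fun x => EReal.continuousAt_add (Or.inl (EReal.coe_ne_top _))
        (Or.inl (EReal.coe_ne_bot _))
  obtain ⟨ε, hε, b, hlb⟩ := exists_linear_lower_bound_of_coercive hlsc
    (fun x => EReal.add_ne_bot_iff.2 ⟨EReal.coe_ne_bot _, hPnb x⟩) hcoer
  refine isBounded_setOf_le_of_linear_lower_bound hε (a := b + ε ^ 2 / (4 * α)) (fun x => ?_) c
  rw [hFγ x]
  refine le_iInf fun y => ?_
  calc ((ε * ‖x‖ - (b + ε ^ 2 / (4 * α)) : ℝ) : EReal)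
      ≤ ((ε * ‖y‖ - b : ℝ) : EReal) + ((α * ‖y - x‖ ^ 2 : ℝ) : EReal) := by
        rw [← EReal.coe_add, EReal.coe_le_coe_iff]
        linarith [mul_norm_sub_sq_le hε.le hα x y]
    _ ≤ _ := add_le_add (hlb y) (EReal.coe_le_coe_iff.2 (hD x y))

/-- If f + P is coercive and γ ∈ (0, 1/L), then the forward-backward envelope
F_γ(x) = inf_y { f(y) + P(y) + D_φ(y,x) }, with φ(x) = ‖x‖²/(2γ) − f(x),
is level bounded. -/
theorem stmt1 {n : ℕ} (f φ : EuclideanSpace ℝ (Fin n) → ℝ)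
    (P : EuclideanSpace ℝ (Fin n) → EReal)
    (L γ : ℝ) (hL : 0 < L) (hγ : 0 < γ) (hγL : γ < 1 / L)
    (hf : ContDiff ℝ 2 f)
    (hlip : LipschitzWith (Real.toNNReal L) (fun x => gradient f x))
    -- P is proper
    (hPne : ∃ x, P x ≠ ⊤) (hPnb : ∀ x, P x ≠ ⊥)
    -- P is closed
    (hPlsc : LowerSemicontinuous P)
    -- P is convex
    (hPconv : ∀ x y : EuclideanSpace ℝ (Fin n), ∀ a b : ℝ, 0 ≤ a → 0 ≤ b → a + b = 1 →
      P (a • x + b • y) ≤ (a : EReal) * P x + (b : EReal) * P y)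
    -- φ(x) = ‖x‖²/(2γ) − f(x)
    (hφ : ∀ x, φ x = ‖x‖ ^ 2 / (2 * γ) - f x)
    -- the forward-backward envelope
    (Fγ : EuclideanSpace ℝ (Fin n) → EReal)
    (hFγ : ∀ x, Fγ x = ⨅ y, ((f y : EReal) + P y +
      ((φ y - φ x - ⟪gradient φ x, y - x⟫ : ℝ) : EReal)))
    -- f + P is coercive: liminf_{‖x‖→∞} (f+P)(x)/‖x‖ > 0
    (hcoer : 0 < liminf (fun x => ((f x : EReal) + P x) * ((‖x‖⁻¹ : ℝ) : EReal))
      (Bornology.cobounded (EuclideanSpace ℝ (Fin n)))) :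
    -- F_γ is level bounded
    ∀ c : ℝ, Bornology.IsBounded {x : EuclideanSpace ℝ (Fin n) | Fγ x ≤ (c : EReal)} :=
  stmt1_general f φ P L γ hγ hγL hf hlip hPnb hPlsc hφ Fγ hFγ hcoer
end

section
/- Let J(z) = (1/2)‖Az − b‖² + μ₁H₁(z) − μ₂H₂(z), where μ₁ > μ₂ > 0, H₁ is a proper closed convex level-bounded function, H₂ is convex with 0 ≤ H₂(z) ≤ H₁(z) for all z, and the infimum v := inf_z { (1/2)‖Az − b‖² + μ₂(H₁(z) − H₂(z)) } is finite (indeed v ≥ 0). Then J is coercive: liminf_{‖z‖→∞} J(z)/‖z‖ > 0. -/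
open Filter

/-- If μ₁ > μ₂ > 0, H₁ is proper closed convex and level bounded, 0 ≤ H₂ ≤ H₁ with
H₂ convex, and inf_z { ½‖Az − b‖² + μ₂(H₁(z) − H₂(z)) } is finite, then
J(z) = ½‖Az − b‖² + μ₁H₁(z) − μ₂H₂(z) is coercive. -/
theorem stmt12 {m n : ℕ} (A : Matrix (Fin m) (Fin n) ℝ) (b : Fin m → ℝ)
    (μ₁ μ₂ : ℝ) (hμ₂ : 0 < μ₂) (hμ : μ₂ < μ₁)
    (H₁ : EuclideanSpace ℝ (Fin n) → EReal) (H₂ : EuclideanSpace ℝ (Fin n) → ℝ)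
    -- H₁ proper
    (hH₁ne : ∃ z, H₁ z ≠ ⊤) (hH₁nb : ∀ z, H₁ z ≠ ⊥)
    -- H₁ closed
    (hH₁lsc : LowerSemicontinuous H₁)
    -- H₁ convex
    (hH₁conv : ∀ x y : EuclideanSpace ℝ (Fin n), ∀ a c : ℝ, 0 ≤ a → 0 ≤ c → a + c = 1 →
      H₁ (a • x + c • y) ≤ (a : EReal) * H₁ x + (c : EReal) * H₁ y)
    -- H₁ level bounded
    (hH₁lb : ∀ c : ℝ, Bornology.IsBounded {z : EuclideanSpace ℝ (Fin n) | H₁ z ≤ (c : EReal)})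
    -- H₂ convex with 0 ≤ H₂ ≤ H₁
    (hH₂conv : ConvexOn ℝ Set.univ H₂)
    (hH₂0 : ∀ z, 0 ≤ H₂ z) (hH₂le : ∀ z, (H₂ z : EReal) ≤ H₁ z)
    -- the infimum v is finite (indeed v ≥ 0)
    (hv : (0 : EReal) ≤ ⨅ z : EuclideanSpace ℝ (Fin n),
      (((1 / 2) * ∑ i, (A.mulVec z i - b i) ^ 2 : ℝ) : EReal)
        + (μ₂ : EReal) * H₁ z - ((μ₂ * H₂ z : ℝ) : EReal))
    -- J
    (J : EuclideanSpace ℝ (Fin n) → EReal)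
    (hJ : ∀ z, J z = (((1 / 2) * ∑ i, (A.mulVec z i - b i) ^ 2 : ℝ) : EReal)
      + (μ₁ : EReal) * H₁ z - ((μ₂ * H₂ z : ℝ) : EReal)) :
    -- J is coercive
    0 < liminf (fun z => J z * ((‖z‖⁻¹ : ℝ) : EReal))
      (Bornology.cobounded (EuclideanSpace ℝ (Fin n))) := by
  classical
  obtain ⟨z₀, hz₀⟩ := hH₁ne
  -- H₁ z₀ is a real number h₀ ≥ 0
  set h₀ : ℝ := (H₁ z₀).toReal with hh₀def
  have hz₀eq : H₁ z₀ = (h₀ : EReal) := (EReal.coe_toReal hz₀ (hH₁nb z₀)).symm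
  have h₀nonneg : 0 ≤ h₀ := by
    have := (hH₂le z₀)
    rw [hz₀eq] at this
    have h2 : (0 : EReal) ≤ (h₀ : EReal) :=
      le_trans (by exact_mod_cast hH₂0 z₀) this
    exact_mod_cast h2
  -- bounded level set
  obtain ⟨R', hR'⟩ := (hH₁lb (h₀ + 1)).subset_closedBall z₀
  set R : ℝ := max R' 0 + 1 with hRdef
  have hRpos : (0 : ℝ) < R := by positivity
  have hR'R : R' < R := by
    have : R' ≤ max R' 0 := le_max_left _ _
    linarith
  have houtside : ∀ w : EuclideanSpace ℝ (Fin n), R ≤ dist w z₀ →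
      ((h₀ + 1 : ℝ) : EReal) < H₁ w := by
    intro w hw
    by_contra hcon
    push_neg at hcon
    have : w ∈ Metric.closedBall z₀ R' := hR' hcon
    rw [Metric.mem_closedBall] at this
    linarith
  -- key growth estimate for H₁
  have hgrow : ∀ z : EuclideanSpace ℝ (Fin n), R ≤ ‖z - z₀‖ →
      ((h₀ + ‖z - z₀‖ / R : ℝ) : EReal) ≤ H₁ z := by
    intro z hz
    have hnz : (0 : ℝ) < ‖z - z₀‖ := lt_of_lt_of_le hRpos hz
    set t : ℝ := R / ‖z - z₀‖ with htdef
    have ht0 : 0 < t := div_pos hRpos hnz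
    have ht1 : t ≤ 1 := by
      rw [htdef, div_le_one hnz]; exact hz
    set w : EuclideanSpace ℝ (Fin n) := (1 - t) • z₀ + t • z with hwdef
    have hwz₀ : dist w z₀ = R := by
      have : w - z₀ = t • (z - z₀) := by
        rw [hwdef]; module
      rw [dist_eq_norm, this, norm_smul]
      simp only [Real.norm_eq_abs, abs_of_pos ht0]
      rw [htdef, div_mul_cancel₀ _ hnz.ne']
    have hwout : ((h₀ + 1 : ℝ) : EReal) < H₁ w := houtside w (le_of_eq hwz₀.symm)
    have hconv := hH₁conv z₀ z (1 - t) t (by linarith) ht0.le (by ring)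
    rw [← hwdef, hz₀eq] at hconv
    -- case on H₁ z
    rcases eq_top_or_lt_top (H₁ z) with htop | hlt
    · rw [htop]; exact le_top
    · have : H₁ z ≠ ⊤ := hlt.ne
      set hzr : ℝ := (H₁ z).toReal with hzrdef
      have hzeq : H₁ z = (hzr : EReal) := (EReal.coe_toReal this (hH₁nb z)).symm
      rw [hzeq] at hconv
      have hcomb : H₁ w ≤ (((1 - t) * h₀ + t * hzr : ℝ) : EReal) := by
        refine le_trans hconv (le_of_eq ?_)
        push_cast
        rfl
      have hlt2 : ((h₀ + 1 : ℝ) : EReal) < (((1 - t) * h₀ + t * hzr : ℝ) : EReal) :=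
        lt_of_lt_of_le hwout hcomb
      have hreal : h₀ + 1 < (1 - t) * h₀ + t * hzr := by exact_mod_cast hlt2
      -- so hzr > h₀ + 1/t = h₀ + ‖z - z₀‖/R
      have hinv : (1 : ℝ) / t = ‖z - z₀‖ / R := by
        rw [htdef]; field_simp
      have : h₀ + ‖z - z₀‖ / R ≤ hzr := by
        rw [← hinv]
        have h1 : t * h₀ + 1 < t * hzr := by nlinarith
        have h2 : h₀ + 1 / t < hzr := by
          rw [← mul_lt_mul_iff_right₀ ht0]
          calc t * (h₀ + 1/t) = t * h₀ + 1 := by field_simp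
          _ < t * hzr := h1
        linarith
      rw [hzeq]
      exact_mod_cast this
  -- J z ≥ (μ₁ - μ₂) * c whenever c ≤ H₁ z, c ≥ 0
  have hJge : ∀ (z : EuclideanSpace ℝ (Fin n)) (c : ℝ), 0 ≤ c →
      ((c : ℝ) : EReal) ≤ H₁ z → (((μ₁ - μ₂) * c : ℝ) : EReal) ≤ J z := by
    intro z c hc hcz
    rw [hJ z]
    set Q : ℝ := (1 / 2) * ∑ i, (A.mulVec z i - b i) ^ 2 with hQdef
    have hQ0 : 0 ≤ Q := by positivity
    rcases eq_top_or_lt_top (H₁ z) with htop | hlt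
    · rw [htop]
      rw [EReal.coe_mul_top_of_pos (by linarith : (0:ℝ) < μ₁)]
      rw [EReal.coe_add_top, EReal.top_sub_coe]
      exact le_top
    · set hz : ℝ := (H₁ z).toReal with hzdef
      have hzeq : H₁ z = (hz : EReal) := (EReal.coe_toReal hlt.ne (hH₁nb z)).symm
      have hcz' : c ≤ hz := by rw [hzeq] at hcz; exact_mod_cast hcz
      have hH2z : H₂ z ≤ hz := by
        have := hH₂le z; rw [hzeq] at this; exact_mod_cast this
      rw [hzeq]
      have : ((Q : ℝ) : EReal) + (μ₁ : EReal) * (hz : EReal) - ((μ₂ * H₂ z : ℝ) : EReal)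
          = ((Q + μ₁ * hz - μ₂ * H₂ z : ℝ) : EReal) := by
        push_cast
        rfl
      rw [this]
      have : (μ₁ - μ₂) * c ≤ Q + μ₁ * hz - μ₂ * H₂ z := by nlinarith [hH₂0 z]
      exact_mod_cast this
  -- conclude: eventually on cobounded, ε ≤ J z / ‖z‖
  set ε : ℝ := (μ₁ - μ₂) / (2 * R) with hεdef
  have hεpos : 0 < ε := by
    apply div_pos (by linarith) (by linarith)
  have hev : ∀ᶠ z in Bornology.cobounded (EuclideanSpace ℝ (Fin n)),
      ((ε : ℝ) : EReal) ≤ J z * ((‖z‖⁻¹ : ℝ) : EReal) := by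
    filter_upwards [eventually_cobounded_le_norm (2 * ‖z₀‖ + 2 * R)] with z hz
    have hz₀n : 0 ≤ ‖z₀‖ := norm_nonneg _
    have hznpos : 0 < ‖z‖ := by linarith
    have hzz₀ : ‖z‖ - ‖z₀‖ ≤ ‖z - z₀‖ := by
      have := norm_sub_norm_le z z₀
      linarith [le_abs_self (‖z‖ - ‖z₀‖)]
    have hge : R ≤ ‖z - z₀‖ := by linarith
    have hH₁z := hgrow z hge
    -- H₁ z ≥ ‖z‖ / (2R)
    have hbig : ‖z‖ / (2 * R) ≤ h₀ + ‖z - z₀‖ / R := by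
      have h1 : ‖z‖ / 2 ≤ ‖z - z₀‖ := by linarith
      have h2 : ‖z‖ / (2 * R) ≤ ‖z - z₀‖ / R := by
        rw [div_le_div_iff₀ (by linarith) hRpos]
        nlinarith
      linarith
    have hH₁z' : ((‖z‖ / (2 * R) : ℝ) : EReal) ≤ H₁ z :=
      le_trans (by exact_mod_cast hbig) hH₁z
    have hJz := hJge z (‖z‖ / (2 * R)) (by positivity) hH₁z'
    have hmul := mul_le_mul_of_nonneg_right hJz
      (by exact_mod_cast inv_nonneg.mpr hznpos.le :
        (0 : EReal) ≤ ((‖z‖⁻¹ : ℝ) : EReal))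
    refine le_trans (le_of_eq ?_) hmul
    rw [← EReal.coe_mul]
    norm_cast
    rw [hεdef]
    field_simp
  have hlim := le_liminf_of_le (by isBoundedDefault) hev
  exact lt_of_lt_of_le (by exact_mod_cast hεpos) hlim
end

section
/- Let H₁ and H₂ be norms on ℝⁿ with H₂ ≤ H₁ pointwise, A ∈ ℝ^{m×n}, b ∈ ℝ^m, μ > 0, and suppose H₁(z) > H₂(z) whenever ‖z‖₀ ≥ r_A + 1, where r_A is the largest integer i such that any i columns of A are linearly independent. Then J(z) := (1/2)‖Az − b‖² + μ(H₁(z) − H₂(z)) is coercive: liminf_{H₂(z)→∞} J(z)/H₂(z) > 0. -/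
open Filter Matrix

/-!
Write `f z = μ (H₁ z - H₂ z) ≥ 0` and `g z = ¼ ∑ (A z)ᵢ²`. On the unit sphere `f + g > 0`: if
`f u = 0` then `‖u‖₀ ≤ r_A`, so the support of `u` lies in a set of `r_A` linearly independent
columns and `A u ≠ 0`. By compactness `f + g ≥ δ > 0` there, and since `f` is 1-homogeneous and
`g` is 2-homogeneous this gives `f z + g z ≥ δ ‖z‖` for `‖z‖ ≥ 1`. As
`½ ∑ (A z - b)ᵢ² ≥ g z - ½ ∑ bᵢ²`, the objective grows at least linearly in `‖z‖`, while
`H₂ z ≤ C ‖z‖`.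
-/

theorem Seminorm.continuous_of_finiteDimensional {E : Type*} [NormedAddCommGroup E]
    [NormedSpace ℝ E] [FiniteDimensional ℝ E] (p : Seminorm ℝ E) : Continuous p :=
  continuousOn_univ.1 (p.convexOn.continuousOn isOpen_univ)

theorem exists_pos_mul_norm_le_add_of_homogeneous {E : Type*} [NormedAddCommGroup E]
    [NormedSpace ℝ E] [ProperSpace E] {f g : E → ℝ} (hf : Continuous f) (hg : Continuous g)
    (hf_smul : ∀ t : ℝ, 0 < t → ∀ x, f (t • x) = t * f x)
    (hg_smul : ∀ t : ℝ, 0 < t → ∀ x, g (t • x) = t ^ 2 * g x)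
    (hg_nonneg : ∀ x, 0 ≤ g x) (hpos : ∀ x, ‖x‖ = 1 → 0 < f x + g x) :
    ∃ δ > 0, ∀ x, 1 ≤ ‖x‖ → δ * ‖x‖ ≤ f x + g x := by
  obtain ⟨δ, hδ, hδle⟩ := (isCompact_sphere (0 : E) 1).exists_forall_le' (hf.add hg).continuousOn
    (a := 0) fun x hx => hpos x (mem_sphere_zero_iff_norm.1 hx)
  refine ⟨δ, hδ, fun x hx => ?_⟩
  set t := ‖x‖
  have ht : 0 < t := by linarith
  set u := t⁻¹ • x
  have hxu : x = t • u := by rw [smul_inv_smul₀ ht.ne']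
  have hu : δ ≤ f u + g u := hδle u (by
    rw [mem_sphere_zero_iff_norm, norm_smul, norm_inv, norm_norm, inv_mul_cancel₀ ht.ne'])
  calc δ * t ≤ t * (f u + g u) := by nlinarith
    _ ≤ t * f u + t ^ 2 * g u := by
      nlinarith [mul_nonneg (mul_nonneg ht.le (sub_nonneg.2 hx)) (hg_nonneg u)]
    _ = f x + g x := by rw [hxu, hf_smul t ht, hg_smul t ht]

theorem Matrix.eq_zero_of_mulVec_eq_zero_of_linearIndepOn {m n R : Type*} [Fintype n]
    [CommRing R] (A : Matrix m n R) {s : Finset n} (hs : LinearIndepOn R Aᵀ (s : Set n))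
    {u : n → R} (hu : ∀ j ∉ s, u j = 0) (hAu : A *ᵥ u = 0) : u = 0 := by
  have hsum : ∑ j ∈ s, u j • Aᵀ j = 0 := by
    rw [← hAu, Finset.sum_subset (Finset.subset_univ s) fun j _ hj => by simp [hu j hj]]
    ext k
    simp [Matrix.mulVec, dotProduct, mul_comm]
  funext j
  by_cases hj : j ∈ s
  · exact linearIndepOn_finset_iff.1 hs u hsum j hj
  · exact hu j hj

theorem Matrix.mulVec_ne_zero_of_card_support_le {m n R : Type*} [Fintype n] [CommRing R]
    [DecidableEq R] (A : Matrix m n R) {r : ℕ} (hr : r ≤ Fintype.card n)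
    (hA : ∀ s : Finset n, s.card = r → LinearIndepOn R Aᵀ (s : Set n)) {u : n → R}
    (hu : (Finset.univ.filter fun j => u j ≠ 0).card ≤ r) (hu0 : u ≠ 0) : A *ᵥ u ≠ 0 := by
  obtain ⟨s, hsupp, hs⟩ := Finset.exists_superset_card_eq hu hr
  refine fun hAu => hu0 (A.eq_zero_of_mulVec_eq_zero_of_linearIndepOn (hA s hs) ?_ hAu)
  intro j hj
  by_contra h
  exact hj (hsupp (Finset.mem_filter.2 ⟨Finset.mem_univ j, h⟩))

theorem mul_sub_add_sum_mulVec_sq_pos {m n : Type*} [Fintype m] [Fintype n]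
    (A : Matrix m n ℝ) {μ : ℝ} (hμ : 0 < μ) {H₁ H₂ : (n → ℝ) → ℝ} (hle : ∀ z, H₂ z ≤ H₁ z)
    {r : ℕ} (hr : r ≤ Fintype.card n)
    (hA : ∀ s : Finset n, s.card = r → LinearIndepOn ℝ Aᵀ (s : Set n))
    (hgt : ∀ z : n → ℝ, r + 1 ≤ (Finset.univ.filter fun i => z i ≠ 0).card → H₂ z < H₁ z)
    {u : n → ℝ} (hu : u ≠ 0) : 0 < μ * (H₁ u - H₂ u) + ∑ i, (A *ᵥ u) i ^ 2 := by
  by_cases hu₁ : H₂ u < H₁ u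
  · exact add_pos_of_pos_of_nonneg (mul_pos hμ (sub_pos.2 hu₁))
      (Finset.sum_nonneg fun i _ => sq_nonneg _)
  have hAu : A *ᵥ u ≠ 0 := A.mulVec_ne_zero_of_card_support_le hr hA
    (by by_contra h; exact hu₁ (hgt u (by omega))) hu
  obtain ⟨i, hi⟩ := Function.ne_iff.1 hAu
  have hsq : 0 < ∑ i, (A *ᵥ u) i ^ 2 :=
    Finset.sum_pos' (fun j _ => sq_nonneg _) ⟨i, Finset.mem_univ i, pow_two_pos_of_ne_zero hi⟩
  rwa [le_antisymm (not_lt.1 hu₁) (hle u), sub_self, mul_zero, zero_add]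

theorem half_sum_sq_sub_le_sum_sub_sq {ι : Type*} (s : Finset ι) (a b : ι → ℝ) :
    (∑ i ∈ s, a i ^ 2) / 2 - ∑ i ∈ s, b i ^ 2 ≤ ∑ i ∈ s, (a i - b i) ^ 2 := by
  rw [Finset.sum_div, ← Finset.sum_sub_distrib]
  exact Finset.sum_le_sum fun i _ => by nlinarith [sq_nonneg (a i - 2 * b i)]

theorem eventually_le_div_of_le_mul_norm {E : Type*} [SeminormedAddCommGroup E] {J H : E → ℝ}
    {δ B C : ℝ} (hδ : 0 < δ) (hC : 0 < C) (hJ : ∀ z, 1 ≤ ‖z‖ → δ * ‖z‖ - B ≤ J z)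
    (hH : ∀ z, H z ≤ C * ‖z‖) : ∀ᶠ z in comap H atTop, δ / (2 * C) ≤ J z / H z := by
  filter_upwards [preimage_mem_comap (Ici_mem_atTop (C * max 1 (2 * B / δ)))] with z hz
  have hHz : C * max 1 (2 * B / δ) ≤ H z := hz
  have hnorm : max 1 (2 * B / δ) ≤ ‖z‖ := le_of_mul_le_mul_left (hHz.trans (hH z)) hC
  have hB : 2 * B ≤ δ * ‖z‖ := by
    have := (div_le_iff₀ hδ).1 ((le_max_right _ _).trans hnorm)
    linarith
  have hHpos : 0 < H z := lt_of_lt_of_le (by positivity) hHz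
  rw [div_le_div_iff₀ (by positivity) hHpos]
  nlinarith [hJ z ((le_max_left _ _).trans hnorm), hH z]

theorem EReal.zero_lt_liminf_coe_of_eventually_le {α : Type*} {l : Filter α} {f : α → ℝ} {c : ℝ}
    (hc : 0 < c) (h : ∀ᶠ x in l, c ≤ f x) : 0 < liminf (fun x => (f x : EReal)) l :=
  (EReal.coe_pos.2 hc).trans_le
    (le_liminf_of_le (by isBoundedDefault) (h.mono fun _ hx => EReal.coe_le_coe_iff.2 hx))

theorem stmt13_general {m n : ℕ} (A : Matrix (Fin m) (Fin n) ℝ) (b : Fin m → ℝ) (μ : ℝ) (hμ : 0 < μ)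
    (H₁ H₂ : (Fin n → ℝ) → ℝ)
    -- H₁ is a norm
    (hH₁add : ∀ x y, H₁ (x + y) ≤ H₁ x + H₁ y)
    (hH₁smul : ∀ (a : ℝ) x, H₁ (a • x) = |a| * H₁ x)
    -- H₂ is a norm
    (hH₂add : ∀ x y, H₂ (x + y) ≤ H₂ x + H₂ y)
    (hH₂smul : ∀ (a : ℝ) x, H₂ (a • x) = |a| * H₂ x)
    -- H₂ ≤ H₁ pointwise
    (hle : ∀ z, H₂ z ≤ H₁ z)
    -- r_A is the largest integer i such that any i columns of A are linearly independent
    (rA : ℕ)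
    (hrA : IsGreatest {i : ℕ | i ≤ n ∧ ∀ s : Finset (Fin n), s.card = i →
      LinearIndependent ℝ (fun j : {j // j ∈ s} => fun k => A k j)} rA)
    -- H₁(z) > H₂(z) whenever ‖z‖₀ ≥ r_A + 1
    (hgt : ∀ z : Fin n → ℝ, rA + 1 ≤ (Finset.univ.filter fun i => z i ≠ 0).card →
      H₂ z < H₁ z)
    (J : (Fin n → ℝ) → ℝ)
    (hJ : ∀ z, J z = (1 / 2) * (∑ i, (A.mulVec z i - b i) ^ 2) + μ * (H₁ z - H₂ z)) :
    0 < liminf (fun z => ((J z / H₂ z : ℝ) : EReal)) (Filter.comap H₂ Filter.atTop) := by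
  have hH₁ : Continuous H₁ := (Seminorm.of H₁ hH₁add fun a x => by
    rw [Real.norm_eq_abs]; exact hH₁smul a x).continuous_of_finiteDimensional
  let p₂ := Seminorm.of H₂ hH₂add fun a x => by
    rw [Real.norm_eq_abs]; exact hH₂smul a x
  have hH₂ : Continuous H₂ := p₂.continuous_of_finiteDimensional
  have hgap : ∀ z, 0 ≤ μ * (H₁ z - H₂ z) := fun z => mul_nonneg hμ.le (sub_nonneg.2 (hle z))
  have hsq : ∀ z, 0 ≤ (∑ i, (A *ᵥ z) i ^ 2) / 4 := fun z => by positivity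
  have hpos : ∀ u : Fin n → ℝ, ‖u‖ = 1 → 0 < μ * (H₁ u - H₂ u) + (∑ i, (A *ᵥ u) i ^ 2) / 4 := by
    intro u hu
    have := mul_sub_add_sum_mulVec_sq_pos A hμ hle (by simpa using hrA.1.1) hrA.1.2 hgt
      (u := u) (by rintro rfl; simp at hu)
    linarith [hgap u, hsq u]
  obtain ⟨δ, hδ, hδle⟩ := exists_pos_mul_norm_le_add_of_homogeneous
    (f := fun z => μ * (H₁ z - H₂ z)) (g := fun z => (∑ i, (A *ᵥ z) i ^ 2) / 4)
    (by fun_prop) (by fun_prop) (fun t ht x => by simp only [hH₁smul, hH₂smul, abs_of_pos ht]; ring)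
    (fun t ht x => by simp only [Matrix.mulVec_smul, Pi.smul_apply, smul_eq_mul, mul_pow,
      ← Finset.mul_sum]; ring) hsq hpos
  obtain ⟨C, hC, hH₂le⟩ := p₂.bound_of_continuous_normedSpace hH₂
  refine EReal.zero_lt_liminf_coe_of_eventually_le (by positivity)
    (eventually_le_div_of_le_mul_norm hδ hC (B := (∑ i, b i ^ 2) / 2) (fun z hz => ?_) hH₂le)
  rw [hJ]
  linarith [hδle z hz, half_sum_sq_sub_le_sum_sub_sq Finset.univ (A *ᵥ z) b]

/-- Let H₁, H₂ be norms on ℝⁿ with H₂ ≤ H₁, and suppose H₁(z) > H₂(z) whenever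
‖z‖₀ ≥ r_A + 1, where any r_A columns of A are linearly independent (r_A is the
largest such integer). Then J(z) = ½‖Az − b‖² + μ(H₁(z) − H₂(z)) satisfies
liminf_{H₂(z)→∞} J(z)/H₂(z) > 0. -/
theorem stmt13 {m n : ℕ} (A : Matrix (Fin m) (Fin n) ℝ) (b : Fin m → ℝ) (μ : ℝ) (hμ : 0 < μ)
    (H₁ H₂ : (Fin n → ℝ) → ℝ)
    -- H₁ is a norm
    (hH₁add : ∀ x y, H₁ (x + y) ≤ H₁ x + H₁ y)
    (hH₁smul : ∀ (a : ℝ) x, H₁ (a • x) = |a| * H₁ x)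
    (hH₁zero : ∀ x, H₁ x = 0 ↔ x = 0)
    -- H₂ is a norm
    (hH₂add : ∀ x y, H₂ (x + y) ≤ H₂ x + H₂ y)
    (hH₂smul : ∀ (a : ℝ) x, H₂ (a • x) = |a| * H₂ x)
    (hH₂zero : ∀ x, H₂ x = 0 ↔ x = 0)
    -- H₂ ≤ H₁ pointwise
    (hle : ∀ z, H₂ z ≤ H₁ z)
    -- r_A is the largest integer i such that any i columns of A are linearly independent
    (rA : ℕ)
    (hrA : IsGreatest {i : ℕ | i ≤ n ∧ ∀ s : Finset (Fin n), s.card = i →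
      LinearIndependent ℝ (fun j : {j // j ∈ s} => fun k => A k j)} rA)
    -- H₁(z) > H₂(z) whenever ‖z‖₀ ≥ r_A + 1
    (hgt : ∀ z : Fin n → ℝ, rA + 1 ≤ (Finset.univ.filter fun i => z i ≠ 0).card →
      H₂ z < H₁ z)
    (J : (Fin n → ℝ) → ℝ)
    (hJ : ∀ z, J z = (1 / 2) * (∑ i, (A.mulVec z i - b i) ^ 2) + μ * (H₁ z - H₂ z)) :
    0 < liminf (fun z => ((J z / H₂ z : ℝ) : EReal)) (Filter.comap H₂ Filter.atTop) :=
  stmt13_general A b μ hμ H₁ H₂ hH₁add hH₁smul hH₂add hH₂smul hle rA hrA hgt J hJ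
end
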